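/- arXiv:1602.01864 — 3 statements merged into one kernel-verified Lean document; each statement's English description precedes it below -/
import Mathlib

section
/- Assume (H3): 0 ≤ B < k₀/K₀. On the Banach space X of bounded functions x : [0,T] → ℝ equipped with the supremum norm (where each x ∈ X is extended to [−r,0) by the convention x(s) := x(s+T)), the linear operator A defined by (Ax)(t) = x(t) + B·β(t−δ)·x(t−δ)/β(t) for t ∈ [0,T] is a bounded bijective operator, and its inverse satisfies the operator-norm bound ‖A⁻¹‖ ≤ k₀/(k₀ − B·K₀). -/
open MeasureTheory Set Filter
open scoped ENNReal

/-- The function `β` determined by the impulse moments `ts 1 < ⋯ < ts m` and the jump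
coefficients `bs 1, …, bs m`: it equals `∏_{k : ts k < t} (1 + bs k)` on `(ts 1, T - δ)`
and `1` elsewhere. -/
noncomputable def impBeta (ts bs : ℕ → ℝ) (m : ℕ) (T δ : ℝ) (t : ℝ) : ℝ :=
  if ts 1 < t ∧ t < T - δ then
    ∏ k ∈ (Finset.Icc 1 m).filter (fun k => ts k < t), (1 + bs k)
  else 1

/-- `x` is absolutely continuous on `[a,b]` with Lebesgue-integrable (a.e.) derivative `g`. -/
def AbsContOn (x g : ℝ → ℝ) (a b : ℝ) : Prop :=
  MeasureTheory.IntegrableOn g (Set.Icc a b) ∧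
    ∀ t ∈ Set.Icc a b, x t = x a + ∫ s in a..t, g s

/-- `x` is absolutely continuous on the half-open interval `(a,b]` with derivative `g`. -/
def AbsContOnIoc (x g : ℝ → ℝ) (a b : ℝ) : Prop :=
  MeasureTheory.IntegrableOn g (Set.Ioc a b) ∧
    ∀ s ∈ Set.Ioc a b, ∀ t ∈ Set.Ioc a b, x t = x s + ∫ u in s..t, g u

/-- `φ` is regulated on `[a,b]`: it has finite left limits on `(a,b]` and finite right
limits on `[a,b)`. -/
def RegulatedOn (φ : ℝ → ℝ) (a b : ℝ) : Prop :=
  (∀ τ ∈ Set.Ioc a b, ∃ L : ℝ, Filter.Tendsto φ (nhdsWithin τ (Set.Ico a τ)) (nhds L)) ∧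
    (∀ τ ∈ Set.Ico a b, ∃ L : ℝ, Filter.Tendsto φ (nhdsWithin τ (Set.Ioc τ b)) (nhds L))

/-- The periodic extension convention `x(s) := x(s + T)` for `s < 0`. -/
noncomputable def pext (T : ℝ) (x : ℝ → ℝ) (s : ℝ) : ℝ := if s < 0 then x (s + T) else x s

/-- The value of a function on `[0,T]` at `s`, using the convention `x(s) := x(s + T)`
for `s < 0`. -/
noncomputable def pval (T : ℝ) (x : Set.Icc (0:ℝ) T → ℝ) (s : ℝ) : ℝ :=
  if h : s ∈ Set.Icc (0:ℝ) T then x ⟨s, h⟩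
  else if h' : s + T ∈ Set.Icc (0:ℝ) T then x ⟨s + T, h'⟩ else 0

theorem meminf {ι : Type*} (g : ι → ℝ) (σ : ι → ι)
    (C : ℝ) (hC : ∀ i, |g i| ≤ C)
    (x : lp (fun _ : ι => ℝ) ∞) : Memℓp (fun i => g i * x (σ i)) ∞ := by
  apply memℓp_infty
  refine ⟨C * ‖x‖, ?_⟩
  rintro y ⟨i, rfl⟩
  have h1 : ‖x (σ i)‖ ≤ ‖x‖ := lp.norm_apply_le_norm ENNReal.top_ne_zero x (σ i)
  calc ‖g i * x (σ i)‖ = |g i| * ‖x (σ i)‖ := by rw [norm_mul]; rfl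
    _ ≤ C * ‖x‖ := mul_le_mul (hC i) h1 (norm_nonneg _) ((abs_nonneg _).trans (hC i))

noncomputable def compMulLin {ι : Type*} (g : ι → ℝ) (σ : ι → ι)
    (C : ℝ) (hC : ∀ i, |g i| ≤ C) :
    lp (fun _ : ι => ℝ) ∞ →ₗ[ℝ] lp (fun _ : ι => ℝ) ∞ where
  toFun x := ⟨fun i => g i * x (σ i), meminf g σ C hC x⟩
  map_add' x y := by
    apply lp.ext
    funext i
    simp only [lp.coeFn_add, Pi.add_apply]
    show g i * (x + y) (σ i) = g i * x (σ i) + g i * y (σ i)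
    rw [lp.coeFn_add]
    simp [mul_add]
  map_smul' c x := by
    apply lp.ext
    funext i
    simp only [lp.coeFn_smul, Pi.smul_apply, RingHom.id_apply]
    show g i * (c • x) (σ i) = c • (g i * x (σ i))
    rw [lp.coeFn_smul]
    simp [smul_eq_mul]; ring

noncomputable def compMulOp {ι : Type*} (g : ι → ℝ) (σ : ι → ι)
    (C : ℝ) (hC0 : 0 ≤ C) (hC : ∀ i, |g i| ≤ C) :
    lp (fun _ : ι => ℝ) ∞ →L[ℝ] lp (fun _ : ι => ℝ) ∞ :=
  LinearMap.mkContinuous (compMulLin g σ C hC) C (fun x => by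
    apply lp.norm_le_of_forall_le (mul_nonneg hC0 (norm_nonneg x))
    intro i
    show ‖g i * x (σ i)‖ ≤ C * ‖x‖
    calc ‖g i * x (σ i)‖ = |g i| * ‖x (σ i)‖ := by rw [norm_mul]; rfl
      _ ≤ C * ‖x‖ := mul_le_mul (hC i) (lp.norm_apply_le_norm ENNReal.top_ne_zero x (σ i))
          (norm_nonneg _) ((abs_nonneg _).trans (hC i)))

theorem compMulOp_apply {ι : Type*} (g : ι → ℝ) (σ : ι → ι)
    (C : ℝ) (hC0 : 0 ≤ C) (hC : ∀ i, |g i| ≤ C) (x : lp (fun _ : ι => ℝ) ∞) (i : ι) :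
    compMulOp g σ C hC0 hC x i = g i * x (σ i) := rfl

theorem compMulOp_norm_le {ι : Type*} (g : ι → ℝ) (σ : ι → ι)
    (C : ℝ) (hC0 : 0 ≤ C) (hC : ∀ i, |g i| ≤ C) :
    ‖compMulOp g σ C hC0 hC‖ ≤ C :=
  LinearMap.mkContinuous_norm_le _ hC0 _

set_option maxHeartbeats 1000000 in
/-- Under (H3), the operator `(Ax)(t) = x(t) + B·β(t-δ)·x(t-δ)/β(t)` is a bounded
bijective linear operator on the Banach space of bounded functions on `[0,T]` with the
sup norm, and its inverse has operator norm at most `k₀/(k₀ - B·K₀)`. -/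
theorem statement4
    (B r δ T : ℝ) (m : ℕ) (ts bs : ℕ → ℝ)
    (hδ0 : 0 ≤ δ) (hδr : δ < r) (hrT : r ≤ T) (hB0 : 0 ≤ B)
    (hm : 1 ≤ m) (ht1 : 0 < ts 1)
    (htmono : ∀ k, 1 ≤ k → k < m → ts k < ts (k + 1))
    (htm : ts m < T - δ)
    (hbk : ∀ k, 1 ≤ k → k ≤ m → -1 < bs k)
    (k0 K0 : ℝ)
    (hk0 : k0 = sInf (impBeta ts bs m T δ '' Set.Icc (-r) T))
    (hK0 : K0 = sSup (impBeta ts bs m T δ '' Set.Icc (-r) T))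
    (hH3 : B < k0 / K0)
    :
    ∃ A : lp (fun _ : Set.Icc (0:ℝ) T => ℝ) ∞ →L[ℝ] lp (fun _ : Set.Icc (0:ℝ) T => ℝ) ∞,
      (∀ x : lp (fun _ : Set.Icc (0:ℝ) T => ℝ) ∞, ∀ i : Set.Icc (0:ℝ) T,
        A x i = x i + B * impBeta ts bs m T δ ((i : ℝ) - δ) * pval T (fun j => x j) ((i : ℝ) - δ)
          / impBeta ts bs m T δ (i : ℝ)) ∧
      Function.Bijective A ∧
      (∀ x : lp (fun _ : Set.Icc (0:ℝ) T => ℝ) ∞, ‖x‖ ≤ (k0 / (k0 - B * K0)) * ‖A x‖) := by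
  have hrpos : 0 < r := lt_of_le_of_lt hδ0 hδr
  have hδT : δ ≤ T := le_trans hδr.le hrT
  have hT0 : (0:ℝ) ≤ T := le_trans hrpos.le hrT
  set βf := impBeta ts bs m T δ with hβf
  have hβpos : ∀ t : ℝ, 0 < βf t := by
    intro t
    rw [hβf]
    unfold impBeta
    split
    · apply Finset.prod_pos
      intro k hk
      simp only [Finset.mem_filter, Finset.mem_Icc] at hk
      have := hbk k hk.1.1 hk.1.2
      linarith
    · norm_num
  have hrange : ∀ t : ℝ, βf t ∈ (insert (1:ℝ)
      (((Finset.Icc 1 m).powerset).image (fun s => ∏ k ∈ s, (1 + bs k))) : Finset ℝ) := by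
    intro t
    rw [hβf]
    unfold impBeta
    split
    · exact Finset.mem_insert_of_mem (Finset.mem_image_of_mem _
        (Finset.mem_powerset.mpr (Finset.filter_subset _ _)))
    · exact Finset.mem_insert_self _ _
  have hSfin : (βf '' Set.Icc (-r) T).Finite :=
    Set.Finite.subset (Finset.finite_toSet _) (by rintro y ⟨t, -, rfl⟩; exact hrange t)
  have h0mem : (0:ℝ) ∈ Set.Icc (-r) T := ⟨by linarith, hT0⟩
  have hSne : (βf '' Set.Icc (-r) T).Nonempty := ⟨βf 0, Set.mem_image_of_mem _ h0mem⟩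
  have hk0le : ∀ t ∈ Set.Icc (-r) T, k0 ≤ βf t := fun t ht =>
    hk0 ▸ csInf_le hSfin.bddBelow (Set.mem_image_of_mem _ ht)
  have hleK0 : ∀ t ∈ Set.Icc (-r) T, βf t ≤ K0 := fun t ht =>
    hK0 ▸ le_csSup hSfin.bddAbove (Set.mem_image_of_mem _ ht)
  have hk0pos : 0 < k0 := by
    have h := hSne.csInf_mem hSfin
    rw [← hk0] at h
    obtain ⟨t, -, ht⟩ := h
    exact ht ▸ hβpos t
  have hK0pos : 0 < K0 := lt_of_lt_of_le (hβpos 0) (hleK0 0 h0mem)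
  have hBK : B * K0 < k0 := by
    have := (lt_div_iff₀ hK0pos).mp hH3; linarith
  set C := B * K0 / k0 with hCdef
  have hC0 : 0 ≤ C := by positivity
  have hC1 : C < 1 := (div_lt_one hk0pos).mpr hBK
  set g : Set.Icc (0:ℝ) T → ℝ := fun i => B * βf ((i:ℝ) - δ) / βf (i:ℝ) with hgdef
  set σ : Set.Icc (0:ℝ) T → Set.Icc (0:ℝ) T := fun i =>
    if h : (i:ℝ) - δ ∈ Set.Icc (0:ℝ) T then ⟨(i:ℝ) - δ, h⟩
    else if h' : (i:ℝ) - δ + T ∈ Set.Icc (0:ℝ) T then ⟨(i:ℝ) - δ + T, h'⟩ else i with hσdef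
  have hg : ∀ i : Set.Icc (0:ℝ) T, |g i| ≤ C := by
    intro i
    obtain ⟨h0, h1⟩ := i.2
    have hm1 : ((i:ℝ)) ∈ Set.Icc (-r) T := ⟨by linarith, h1⟩
    have hm2 : ((i:ℝ) - δ) ∈ Set.Icc (-r) T := ⟨by linarith, by linarith⟩
    have hnn : 0 ≤ g i := by
      rw [hgdef]
      exact div_nonneg (mul_nonneg hB0 (hβpos _).le) (hβpos _).le
    rw [abs_of_nonneg hnn, hgdef, hCdef]
    exact div_le_div₀ (by positivity) (mul_le_mul_of_nonneg_left (hleK0 _ hm2) hB0)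
      hk0pos (hk0le _ hm1)
  set N := compMulOp g σ C hC0 hg with hNdef
  have hNnorm : ‖N‖ ≤ C := compMulOp_norm_le g σ C hC0 hg
  have hNx : ∀ x, ‖N x‖ ≤ C * ‖x‖ := fun x =>
    (N.le_opNorm x).trans (mul_le_mul_of_nonneg_right hNnorm (norm_nonneg x))
  set A : lp (fun _ : Set.Icc (0:ℝ) T => ℝ) ∞ →L[ℝ] lp (fun _ : Set.Icc (0:ℝ) T => ℝ) ∞ :=
    1 + N with hAdef
  have happ : ∀ x : lp (fun _ : Set.Icc (0:ℝ) T => ℝ) ∞, ∀ i, A x i = x i + g i * x (σ i) := by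
    intro x i
    have h1 : A x = x + N x := by
      rw [hAdef, ContinuousLinearMap.add_apply, ContinuousLinearMap.one_apply]
    rw [h1, lp.coeFn_add, Pi.add_apply]
    rfl
  refine ⟨A, ?_, ?_, ?_⟩
  · intro x i
    rw [happ x i]
    congr 1
    unfold pval
    by_cases h : (i:ℝ) - δ ∈ Set.Icc (0:ℝ) T
    · rw [dif_pos h]
      simp only [hgdef, hσdef, dif_pos h]
      ring
    · have h' : (i:ℝ) - δ + T ∈ Set.Icc (0:ℝ) T := by
        obtain ⟨h0, h1⟩ := i.2
        simp only [Set.mem_Icc, not_and_or, not_le] at h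
        rcases h with h | h
        · exact ⟨by linarith, by linarith⟩
        · linarith
      rw [dif_neg h, dif_pos h']
      simp only [hgdef, hσdef, dif_neg h, dif_pos h']
      ring
  · have hNlt : ‖-N‖ < 1 := by rw [norm_neg]; exact lt_of_le_of_lt hNnorm hC1
    set u : (lp (fun _ : Set.Icc (0:ℝ) T => ℝ) ∞ →L[ℝ] lp (fun _ : Set.Icc (0:ℝ) T => ℝ) ∞)ˣ :=
      Units.oneSub (-N) hNlt with hudef
    have hu : (u : lp (fun _ : Set.Icc (0:ℝ) T => ℝ) ∞ →L[ℝ] lp (fun _ : Set.Icc (0:ℝ) T => ℝ) ∞)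
        = A := by
      rw [hAdef]
      show 1 - (-N) = 1 + N
      rw [sub_neg_eq_add]
    have hleft : ∀ x, (↑u⁻¹ : lp (fun _ : Set.Icc (0:ℝ) T => ℝ) ∞ →L[ℝ]
        lp (fun _ : Set.Icc (0:ℝ) T => ℝ) ∞) (A x) = x := by
      intro x
      rw [← hu]
      have h1 : (↑u⁻¹ * ↑u : lp (fun _ : Set.Icc (0:ℝ) T => ℝ) ∞ →L[ℝ]
          lp (fun _ : Set.Icc (0:ℝ) T => ℝ) ∞) = 1 := u.inv_mul
      calc (↑u⁻¹ : lp (fun _ : Set.Icc (0:ℝ) T => ℝ) ∞ →L[ℝ]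
            lp (fun _ : Set.Icc (0:ℝ) T => ℝ) ∞) ((↑u : lp (fun _ : Set.Icc (0:ℝ) T => ℝ) ∞ →L[ℝ]
            lp (fun _ : Set.Icc (0:ℝ) T => ℝ) ∞) x)
          = (↑u⁻¹ * ↑u : lp (fun _ : Set.Icc (0:ℝ) T => ℝ) ∞ →L[ℝ]
            lp (fun _ : Set.Icc (0:ℝ) T => ℝ) ∞) x := rfl
        _ = x := by rw [h1]; rfl
    have hright : ∀ x, A ((↑u⁻¹ : lp (fun _ : Set.Icc (0:ℝ) T => ℝ) ∞ →L[ℝ]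
        lp (fun _ : Set.Icc (0:ℝ) T => ℝ) ∞) x) = x := by
      intro x
      rw [← hu]
      have h1 : (↑u * ↑u⁻¹ : lp (fun _ : Set.Icc (0:ℝ) T => ℝ) ∞ →L[ℝ]
          lp (fun _ : Set.Icc (0:ℝ) T => ℝ) ∞) = 1 := u.mul_inv
      calc (↑u : lp (fun _ : Set.Icc (0:ℝ) T => ℝ) ∞ →L[ℝ]
            lp (fun _ : Set.Icc (0:ℝ) T => ℝ) ∞) ((↑u⁻¹ : lp (fun _ : Set.Icc (0:ℝ) T => ℝ) ∞ →L[ℝ]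
            lp (fun _ : Set.Icc (0:ℝ) T => ℝ) ∞) x)
          = (↑u * ↑u⁻¹ : lp (fun _ : Set.Icc (0:ℝ) T => ℝ) ∞ →L[ℝ]
            lp (fun _ : Set.Icc (0:ℝ) T => ℝ) ∞) x := rfl
        _ = x := by rw [h1]; rfl
    exact Function.bijective_iff_has_inverse.mpr ⟨_, hleft, hright⟩
  · intro x
    have hxAx : ‖x‖ ≤ ‖A x‖ + C * ‖x‖ := by
      have h1 : x = A x - N x := by
        rw [hAdef]
        rw [ContinuousLinearMap.add_apply, ContinuousLinearMap.one_apply]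
        abel
      calc ‖x‖ = ‖A x - N x‖ := by rw [← h1]
        _ ≤ ‖A x‖ + ‖N x‖ := norm_sub_le _ _
        _ ≤ ‖A x‖ + C * ‖x‖ := by have := hNx x; linarith
    have hd : 0 < k0 - B * K0 := by linarith
    have hq : 0 < k0 / (k0 - B * K0) := div_pos hk0pos hd
    have h3 : (1 - C) * ‖x‖ ≤ ‖A x‖ := by
      have heq : (1 - C) * ‖x‖ = ‖x‖ - C * ‖x‖ := by ring
      rw [heq]; linarith
    have hkey : (k0 / (k0 - B * K0)) * (1 - C) = 1 := by
      rw [hCdef]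
      field_simp
    have hfac : (k0 / (k0 - B * K0)) * ((1 - C) * ‖x‖) = ‖x‖ := by
      rw [← mul_assoc, hkey, one_mul]
    calc ‖x‖ = (k0 / (k0 - B * K0)) * ((1 - C) * ‖x‖) := hfac.symm
      _ ≤ (k0 / (k0 - B * K0)) * ‖A x‖ := mul_le_mul_of_nonneg_left h3 hq.le
end

section
/- Assume (H3): 0 ≤ B < k₀/K₀. Let x : [0,T] → ℝ be absolutely continuous with x(0) = x(T) (extended to [−r,0) by x(s) := x(s+T)), and suppose x′(t) + B·β(t−δ)·x′(t−δ)/β(t) = 0 for almost every t ∈ [0,T]. Then x is a constant function. -/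
open MeasureTheory Set Filter
open scoped ENNReal

/-- The kernel of `L` consists of constant functions: a `T`-periodic absolutely
continuous `x` with `x'(t) + B·β(t-δ)·x'(t-δ)/β(t) = 0` a.e. is constant. -/
theorem statement6
    (B r δ T : ℝ) (m : ℕ) (ts bs : ℕ → ℝ)
    (hδ0 : 0 ≤ δ) (hδr : δ < r) (hrT : r ≤ T) (hB0 : 0 ≤ B)
    (hm : 1 ≤ m) (ht1 : 0 < ts 1)
    (htmono : ∀ k, 1 ≤ k → k < m → ts k < ts (k + 1))
    (htm : ts m < T - δ)
    (hbk : ∀ k, 1 ≤ k → k ≤ m → -1 < bs k)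
    (k0 K0 : ℝ)
    (hk0 : k0 = sInf (impBeta ts bs m T δ '' Set.Icc (-r) T))
    (hK0 : K0 = sSup (impBeta ts bs m T δ '' Set.Icc (-r) T))
    (hH3 : B < k0 / K0)
    (x g : ℝ → ℝ)
    (hAC : AbsContOn x g 0 T) (hper : x 0 = x T)
    (heq : ∀ᵐ t ∂volume, t ∈ Set.Icc 0 T →
      g t + B * impBeta ts bs m T δ (t - δ) * pext T g (t - δ) / impBeta ts bs m T δ t = 0) :
    ∀ s ∈ Set.Icc (0:ℝ) T, ∀ t ∈ Set.Icc (0:ℝ) T, x s = x t := by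
  have hδT : δ ≤ T := hδr.le.trans hrT
  have hr0 : (0:ℝ) < r := lt_of_le_of_lt hδ0 hδr
  have hT0 : (0:ℝ) ≤ T := hr0.le.trans hrT
  set β := impBeta ts bs m T δ with hβdef
  -- β is everywhere positive
  have hβpos : ∀ t, 0 < β t := by
    intro t
    rw [hβdef]; unfold impBeta
    split
    · refine Finset.prod_pos fun k hk => ?_
      rw [Finset.mem_filter, Finset.mem_Icc] at hk
      have := hbk k hk.1.1 hk.1.2
      linarith
    · norm_num
  -- the set of values of β is finite
  have hSsub : β '' Set.Icc (-r) T ⊆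
      ((insert (1:ℝ) ((Finset.Icc 1 m).powerset.image fun s => ∏ k ∈ s, (1 + bs k)) :
        Finset ℝ) : Set ℝ) := by
    rintro y ⟨t, -, rfl⟩
    rw [hβdef]
    unfold impBeta
    simp only [Finset.coe_insert, Set.mem_insert_iff, Finset.mem_coe, Finset.mem_image]
    split
    · exact Or.inr ⟨_, Finset.mem_powerset.2 (Finset.filter_subset _ _), rfl⟩
    · exact Or.inl rfl
  have hSfin : (β '' Set.Icc (-r) T).Finite :=
    Set.Finite.subset (Finset.finite_toSet _) hSsub
  have hmemIcc : (-r) ∈ Set.Icc (-r) T := ⟨le_refl _, by linarith⟩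
  have hSne : (β '' Set.Icc (-r) T).Nonempty := ⟨β (-r), Set.mem_image_of_mem _ hmemIcc⟩
  have hk0mem : k0 ∈ β '' Set.Icc (-r) T := hk0 ▸ hSne.csInf_mem hSfin
  have hK0mem : K0 ∈ β '' Set.Icc (-r) T := hK0 ▸ hSne.csSup_mem hSfin
  have hk0pos : 0 < k0 := by obtain ⟨t, -, ht⟩ := hk0mem; exact ht ▸ hβpos t
  have hK0pos : 0 < K0 := by obtain ⟨t, -, ht⟩ := hK0mem; exact ht ▸ hβpos t
  have hk0le : ∀ t ∈ Set.Icc (-r) T, k0 ≤ β t := fun t ht =>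
    hk0 ▸ csInf_le hSfin.bddBelow (Set.mem_image_of_mem _ ht)
  have hleK0 : ∀ t ∈ Set.Icc (-r) T, β t ≤ K0 := fun t ht =>
    hK0 ▸ le_csSup hSfin.bddAbove (Set.mem_image_of_mem _ ht)
  have hc0 : 0 ≤ B * K0 / k0 := by positivity
  have hc1 : B * K0 / k0 < 1 := by
    rw [div_lt_one hk0pos]
    calc B * K0 < (k0 / K0) * K0 := by exact mul_lt_mul_of_pos_right hH3 hK0pos
    _ = k0 := by field_simp
  set F := fun t => pext T g (t - δ) with hFdef
  -- a.e. pointwise bound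
  have hbound : ∀ᵐ t ∂(volume.restrict (Set.Ioc (0:ℝ) T)),
      |g t| ≤ (B * K0 / k0) * |F t| := by
    filter_upwards [ae_restrict_of_ae heq, ae_restrict_mem measurableSet_Ioc] with t h1 h2
    have htIcc : t ∈ Set.Icc (0:ℝ) T := Set.Ioc_subset_Icc_self h2
    have htI : t ∈ Set.Icc (-r) T := ⟨by linarith [htIcc.1], htIcc.2⟩
    have htdI : t - δ ∈ Set.Icc (-r) T := ⟨by linarith [htIcc.1], by linarith [htIcc.2]⟩
    have h3 := h1 htIcc
    have hβt : 0 < β t := hβpos t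
    have hβtd : 0 < β (t - δ) := hβpos (t - δ)
    have hg : g t = -(B * β (t - δ) * pext T g (t - δ) / β t) := by linarith
    have hFt : F t = pext T g (t - δ) := rfl
    rw [hg, hFt, abs_neg, abs_div, abs_mul, abs_mul, abs_of_nonneg hB0,
      abs_of_pos hβtd, abs_of_pos hβt, div_mul_eq_mul_div]
    gcongr
    · exact hleK0 _ htdI
    · exact hk0le _ htI
  -- integrability facts
  have hgInt : IntegrableOn g (Set.Icc 0 T) := hAC.1
  have hgII : IntervalIntegrable g volume 0 T := by
    rw [intervalIntegrable_iff_integrableOn_Icc_of_le hT0]; exact hgInt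
  have hδne : ∀ᵐ t : ℝ ∂volume, t ≠ δ := by
    rw [ae_iff]
    have : {t : ℝ | ¬ t ≠ δ} = {δ} := by ext t; simp
    rw [this]; exact measure_singleton δ
  -- F on (0, δ] is a.e. a translate of g
  have hFa : IntegrableOn F (Set.Ioc 0 δ) := by
    have h1 : IntervalIntegrable (fun t => g (t + (T - δ))) volume 0 δ := by
      have h0 : IntervalIntegrable g volume (T - δ) T :=
        hgII.mono_set (by rw [Set.uIcc_of_le hT0, Set.uIcc_of_le (by linarith)]
                          exact Set.Icc_subset_Icc (by linarith) le_rfl)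
      have := h0.comp_add_right (T - δ)
      simpa using this
    have hae : (fun t => g (t + (T - δ))) =ᵐ[volume.restrict (Set.Ioc 0 δ)] F := by
      filter_upwards [ae_restrict_of_ae hδne, ae_restrict_mem measurableSet_Ioc] with t h1 h2
      have htδ : t < δ := lt_of_le_of_ne h2.2 h1
      have : t - δ < 0 := by linarith
      simp only [hFdef, pext, if_pos this]
      congr 1; ring
    exact Integrable.congr ((intervalIntegrable_iff_integrableOn_Ioc_of_le hδ0).mp h1) hae
  -- F on (δ, T] equals g(t - δ)
  have hFbEq : ∀ t ∈ Set.Ioc δ T, F t = g (t - δ) := by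
    intro t ht
    have : ¬ (t - δ < 0) := by push_neg; linarith [ht.1]
    simp only [hFdef, pext, if_neg this]
  have hFb : IntegrableOn F (Set.Ioc δ T) := by
    have h1 : IntervalIntegrable (fun t => g (t - δ)) volume δ T := by
      have h0 : IntervalIntegrable g volume 0 (T - δ) :=
        hgII.mono_set (by rw [Set.uIcc_of_le hT0, Set.uIcc_of_le (by linarith)]
                          exact Set.Icc_subset_Icc le_rfl (by linarith))
      have := h0.comp_sub_right δ
      simpa using this
    have hae : (fun t => g (t - δ)) =ᵐ[volume.restrict (Set.Ioc δ T)] F := by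
      filter_upwards [ae_restrict_mem measurableSet_Ioc] with t h2
      exact (hFbEq t h2).symm
    exact Integrable.congr ((intervalIntegrable_iff_integrableOn_Ioc_of_le hδT).mp h1) hae
  have hFInt : IntegrableOn F (Set.Ioc 0 T) := by
    rw [← Set.Ioc_union_Ioc_eq_Ioc hδ0 hδT]
    exact hFa.union hFb
  -- the integral of |F| equals the integral of |g|
  have e1 : (∫ t in (0:ℝ)..δ, |F t|) = ∫ t in (T - δ)..T, |g t| := by
    have : (∫ t in (0:ℝ)..δ, |F t|) = ∫ t in (0:ℝ)..δ, |g (t + (T - δ))| := by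
      apply intervalIntegral.integral_congr_ae
      filter_upwards [hδne] with t h1 h2
      rw [Set.uIoc_of_le hδ0] at h2
      have htδ : t < δ := lt_of_le_of_ne h2.2 h1
      have hneg : t - δ < 0 := by linarith
      simp only [hFdef, pext, if_pos hneg]
      congr 2; ring
    rw [this]
    have := intervalIntegral.integral_comp_add_right (a := 0) (b := δ)
      (fun s => |g s|) (T - δ)
    simpa using this
  have e2 : (∫ t in δ..T, |F t|) = ∫ t in (0:ℝ)..(T - δ), |g t| := by
    have : (∫ t in δ..T, |F t|) = ∫ t in δ..T, |g (t - δ)| := by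
      apply intervalIntegral.integral_congr_ae
      filter_upwards with t h2
      rw [Set.uIoc_of_le hδT] at h2
      rw [hFbEq t h2]
    rw [this]
    have := intervalIntegral.integral_comp_sub_right (a := δ) (b := T)
      (fun s => |g s|) δ
    simpa using this
  have hFaII : IntervalIntegrable (fun t => |F t|) volume 0 δ := by
    rw [intervalIntegrable_iff_integrableOn_Ioc_of_le hδ0]; exact hFa.abs
  have hFbII : IntervalIntegrable (fun t => |F t|) volume δ T := by
    rw [intervalIntegrable_iff_integrableOn_Ioc_of_le hδT]; exact hFb.abs
  have hg1II : IntervalIntegrable (fun t => |g t|) volume 0 (T - δ) := by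
    rw [intervalIntegrable_iff_integrableOn_Ioc_of_le (by linarith)]
    exact ((hgInt.mono_set (Set.Ioc_subset_Icc_self.trans
      (Set.Icc_subset_Icc le_rfl (by linarith))))).abs
  have hg2II : IntervalIntegrable (fun t => |g t|) volume (T - δ) T := by
    rw [intervalIntegrable_iff_integrableOn_Ioc_of_le (by linarith : T - δ ≤ T)]
    exact ((hgInt.mono_set (Set.Ioc_subset_Icc_self.trans
      (Set.Icc_subset_Icc (by linarith) le_rfl)))).abs
  have eF : (∫ t in Set.Ioc (0:ℝ) T, |F t|) = ∫ t in Set.Ioc (0:ℝ) T, |g t| := by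
    rw [← intervalIntegral.integral_of_le hT0, ← intervalIntegral.integral_of_le hT0,
      ← intervalIntegral.integral_add_adjacent_intervals hFaII hFbII, e1, e2,
      ← intervalIntegral.integral_add_adjacent_intervals hg1II hg2II]
    ring
  -- the key inequality forces the integral of |g| to vanish
  have hgabsInt : Integrable (fun t => |g t|) (volume.restrict (Set.Ioc (0:ℝ) T)) :=
    (hgInt.mono_set Set.Ioc_subset_Icc_self).abs
  have hineq : (∫ t in Set.Ioc (0:ℝ) T, |g t|) ≤
      (B * K0 / k0) * ∫ t in Set.Ioc (0:ℝ) T, |g t| := by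
    calc (∫ t in Set.Ioc (0:ℝ) T, |g t|)
        ≤ ∫ t in Set.Ioc (0:ℝ) T, (B * K0 / k0) * |F t| :=
          integral_mono_ae hgabsInt (hFInt.abs.const_mul _) hbound
      _ = (B * K0 / k0) * ∫ t in Set.Ioc (0:ℝ) T, |F t| := by
          rw [integral_const_mul]
      _ = (B * K0 / k0) * ∫ t in Set.Ioc (0:ℝ) T, |g t| := by rw [eF]
  have hInonneg : 0 ≤ ∫ t in Set.Ioc (0:ℝ) T, |g t| :=
    integral_nonneg fun t => abs_nonneg _
  have hI0 : (∫ t in Set.Ioc (0:ℝ) T, |g t|) = 0 := by nlinarith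
  -- hence g vanishes a.e. on (0, T]
  have hg0 : g =ᵐ[volume.restrict (Set.Ioc (0:ℝ) T)] 0 := by
    have habs := (integral_eq_zero_iff_of_nonneg_ae
      (Eventually.of_forall fun t => abs_nonneg (g t)) hgabsInt).mp hI0
    filter_upwards [habs] with t ht
    simpa [abs_eq_zero] using ht
  -- conclude that x is constant
  suffices h : ∀ u ∈ Set.Icc (0:ℝ) T, x u = x 0 by
    intro s hs t ht; rw [h s hs, h t ht]
  intro u hu
  rw [hAC.2 u hu]
  have : (∫ v in (0:ℝ)..u, g v) = 0 := by
    rw [intervalIntegral.integral_of_le hu.1]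
    exact integral_eq_zero_of_ae
      (ae_restrict_of_ae_restrict_of_subset (Set.Ioc_subset_Ioc_right hu.2) hg0)
  rw [this, add_zero]
end

section
/- Assume hypotheses (H1)–(H4) with constants d and b, and let S > 0 satisfy |f(t, 0)| ≤ S for every t ∈ [0,T] (where 0 denotes the zero function on [−r,0]). Set D := d + (b·d·k₀ + S)·T/(k₀ − b·T·k₀ − B·K₀). Then for every λ ∈ (0,1) and every absolutely continuous x : [0,T] → ℝ with x(0) = x(T) (extended to [−r,0) by x(s) := x(s+T)) satisfying x′(t) + B·β(t−δ)·x′(t−δ)/β(t) = λ·f(t, β_t x_t)/β(t) for almost every t ∈ [0,T], one has sup_{t∈[0,T]} |x(t)| ≤ D. In particular, D does not depend on λ. -/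
/-!
Since `x 0 = x T`, the derivative `g` has mean zero on `[0, T]`, and the coefficient
`c t = B β(t - δ) / β t` of the delayed derivative is at most `q = B K₀ / k₀ < 1`.

If `|x| > d` on all of `[0, T]`, then `x` has constant sign, hence by (H2) so has the right-hand
side `F`, say `F > 0`. Then `-g t < q (g⁺)(t - δ)` a.e.; as the delay only rotates the period,
`∫ g⁻ ≤ q ∫ g⁺ = q ∫ g⁻`, so `∫ g⁺ = ∫ g⁻ = 0`, which contradicts `∫ (g + q (g⁺)(· - δ)) > 0`.

Hence `|x t₀| ≤ d` for some `t₀`, and `|x| ≤ d + G` with `G = ∫ |g|`. Bounding `F` through (H4)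
and integrating the equation gives `G ≤ q G + (S / k₀ + b (d + G)) T`, and `b T < 1 - q`
solves this for `G`.
-/

open MeasureTheory Set Filter
open scoped ENNReal

open scoped Topology Interval

namespace Filter.EventuallyConst

variable {α β : Type*} {l : Filter α}

lemma ite {p : α → Prop} [DecidablePred p] {f g : α → β} (hp : EventuallyConst p l)
    (hf : EventuallyConst f l) (hg : EventuallyConst g l) :
    EventuallyConst (fun x => if p x then f x else g x) l := by
  rcases eventuallyConst_pred.1 hp with h | h
  · exact hf.congr (h.mono fun x hx => (if_pos hx).symm)
  · exact hg.congr (h.mono fun x hx => (if_neg hx).symm)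

lemma finsetProd {ι : Type*} [CommMonoid β] {s : Finset ι} {f : ι → α → β}
    (hf : ∀ i ∈ s, EventuallyConst (f i) l) : EventuallyConst (fun x => ∏ i ∈ s, f i x) l := by
  classical
  induction s using Finset.induction_on with
  | empty => simp
  | insert i s hi ih =>
    simp_rw [Finset.prod_insert hi]
    exact (hf i (Finset.mem_insert_self i s)).comp₂ (· * ·)
      (ih fun j hj => hf j (Finset.mem_insert_of_mem hj))

end Filter.EventuallyConst

section OneSided

variable {α : Type*} [LinearOrder α] [TopologicalSpace α] [OrderTopology α]

lemma eventuallyConst_lt_nhdsLT (p a : α) : EventuallyConst (p < ·) (𝓝[<] a) := by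
  refine eventuallyConst_pred.2 ((lt_or_ge p a).imp (fun h => ?_) fun h => ?_)
  · exact (eventually_gt_nhds h).filter_mono nhdsWithin_le_nhds
  · exact eventually_nhdsWithin_of_forall fun x hx => (hx.trans_le h).not_gt

lemma eventuallyConst_gt_nhdsLT (p a : α) : EventuallyConst (· < p) (𝓝[<] a) := by
  refine eventuallyConst_pred.2 ((le_or_gt a p).imp (fun h => ?_) fun h => ?_)
  · exact eventually_nhdsWithin_of_forall fun x hx => lt_of_lt_of_le hx h
  · exact ((eventually_gt_nhds h).filter_mono nhdsWithin_le_nhds).mono fun x hx => hx.not_gt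

lemma eventuallyConst_lt_nhdsGT (p a : α) : EventuallyConst (p < ·) (𝓝[>] a) := by
  refine eventuallyConst_pred.2 ((le_or_gt p a).imp (fun h => ?_) fun h => ?_)
  · exact eventually_nhdsWithin_of_forall fun x hx => lt_of_le_of_lt h hx
  · exact ((eventually_lt_nhds h).filter_mono nhdsWithin_le_nhds).mono fun x hx => hx.not_gt

lemma eventuallyConst_gt_nhdsGT (p a : α) : EventuallyConst (· < p) (𝓝[>] a) := by
  refine eventuallyConst_pred.2 ((lt_or_ge a p).imp (fun h => ?_) fun h => ?_)
  · exact (eventually_lt_nhds h).filter_mono nhdsWithin_le_nhds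
  · exact eventually_nhdsWithin_of_forall fun x hx => (h.trans_lt hx).not_gt

end OneSided

lemma ContinuousOn.regulatedOn {φ : ℝ → ℝ} {a b : ℝ} (h : ContinuousOn φ (Icc a b)) :
    RegulatedOn φ a b :=
  ⟨fun τ hτ => ⟨φ τ, (h τ ⟨hτ.1.le, hτ.2⟩).mono_left
      (nhdsWithin_mono _ fun _ hs => ⟨hs.1, hs.2.le.trans hτ.2⟩)⟩,
    fun τ hτ => ⟨φ τ, (h τ ⟨hτ.1, hτ.2.le⟩).mono_left
      (nhdsWithin_mono _ fun _ hs => ⟨hτ.1.trans hs.1.le, hs.2⟩)⟩⟩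

lemma regulatedOn_of_eventuallyConst {φ : ℝ → ℝ} {a b : ℝ}
    (h : ∀ τ, EventuallyConst φ (𝓝[<] τ) ∧ EventuallyConst φ (𝓝[>] τ)) : RegulatedOn φ a b := by
  refine ⟨fun τ _ => ?_, fun τ _ => ?_⟩
  · obtain ⟨c, hc⟩ := ((h τ).1.anti (nhdsWithin_mono _ Ico_subset_Iio_self)).exists_tendsto
    exact ⟨c, hc.mono_right (pure_le_nhds c)⟩
  · obtain ⟨c, hc⟩ := ((h τ).2.anti (nhdsWithin_mono _ Ioc_subset_Ioi_self)).exists_tendsto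
    exact ⟨c, hc.mono_right (pure_le_nhds c)⟩

lemma RegulatedOn.mul {φ ψ : ℝ → ℝ} {a b : ℝ} (hφ : RegulatedOn φ a b)
    (hψ : RegulatedOn ψ a b) : RegulatedOn (fun τ => φ τ * ψ τ) a b := by
  refine ⟨fun τ hτ => ?_, fun τ hτ => ?_⟩
  · obtain ⟨L, hL⟩ := hφ.1 τ hτ
    obtain ⟨M, hM⟩ := hψ.1 τ hτ
    exact ⟨L * M, hL.mul hM⟩
  · obtain ⟨L, hL⟩ := hφ.2 τ hτ
    obtain ⟨M, hM⟩ := hψ.2 τ hτ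
    exact ⟨L * M, hL.mul hM⟩

section ImpBeta

variable (ts bs : ℕ → ℝ) (m : ℕ) (T δ : ℝ)

lemma finite_range_impBeta : (range (impBeta ts bs m T δ)).Finite := by
  refine ((insert 1 ((Finset.Icc 1 m).powerset.image fun u => ∏ k ∈ u, (1 + bs k)) : Finset ℝ)
    |>.finite_toSet).subset ?_
  rintro _ ⟨t, rfl⟩
  unfold impBeta
  split
  · exact Finset.mem_insert_of_mem (Finset.mem_image.2
      ⟨_, Finset.mem_powerset.2 (Finset.filter_subset _ _), rfl⟩)
  · exact Finset.mem_insert_self _ _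

lemma impBeta_pos (hbs : ∀ k, 1 ≤ k → k ≤ m → -1 < bs k) (t : ℝ) : 0 < impBeta ts bs m T δ t := by
  unfold impBeta
  split
  · refine Finset.prod_pos fun k hk => ?_
    obtain ⟨h1, h2⟩ := Finset.mem_Icc.1 (Finset.mem_filter.1 hk).1
    linarith [hbs k h1 h2]
  · exact one_pos

lemma impBeta_eventuallyConst {l : Filter ℝ}
    (hl : ∀ p : ℝ, EventuallyConst (p < ·) l ∧ EventuallyConst (· < p) l) :
    EventuallyConst (impBeta ts bs m T δ) l := by
  show EventuallyConst (fun t => impBeta ts bs m T δ t) l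
  simp only [impBeta, Finset.prod_filter]
  exact ((hl _).1.comp₂ (· ∧ ·) (hl _).2).ite
    (.finsetProd fun k _ => (hl _).1.ite (.const _) (.const _)) (.const 1)

lemma regulatedOn_impBeta_comp_add (t a b : ℝ) :
    RegulatedOn (fun τ => impBeta ts bs m T δ (t + τ)) a b :=
  regulatedOn_of_eventuallyConst fun _ =>
    ⟨(impBeta_eventuallyConst ts bs m T δ fun p =>
        ⟨eventuallyConst_lt_nhdsLT p _, eventuallyConst_gt_nhdsLT p _⟩).comp_tendsto
        Filter.map_add_left_nhdsLT.le,
      (impBeta_eventuallyConst ts bs m T δ fun p =>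
        ⟨eventuallyConst_lt_nhdsGT p _, eventuallyConst_gt_nhdsGT p _⟩).comp_tendsto
        Filter.map_add_left_nhdsGT.le⟩

lemma sInf_image_impBeta_pos (hbs : ∀ k, 1 ≤ k → k ≤ m → -1 < bs k) {s : Set ℝ}
    (hs : s.Nonempty) : 0 < sInf (impBeta ts bs m T δ '' s) := by
  obtain ⟨t, -, ht⟩ := (hs.image _).csInf_mem
    ((finite_range_impBeta ts bs m T δ).subset (image_subset_range _ _))
  exact ht ▸ impBeta_pos ts bs m T δ hbs t

lemma sInf_image_impBeta_le {s : Set ℝ} {t : ℝ} (ht : t ∈ s) :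
    sInf (impBeta ts bs m T δ '' s) ≤ impBeta ts bs m T δ t :=
  csInf_le ((finite_range_impBeta ts bs m T δ).subset (image_subset_range _ _)).bddBelow
    (mem_image_of_mem _ ht)

lemma le_sSup_image_impBeta {s : Set ℝ} {t : ℝ} (ht : t ∈ s) :
    impBeta ts bs m T δ t ≤ sSup (impBeta ts bs m T δ '' s) :=
  le_csSup ((finite_range_impBeta ts bs m T δ).subset (image_subset_range _ _)).bddAbove
    (mem_image_of_mem _ ht)

lemma impBeta_delay_ratio_mem_Icc (hbs : ∀ k, 1 ≤ k → k ≤ m → -1 < bs k) {B r : ℝ} (hB : 0 ≤ B)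
    (hδ0 : 0 ≤ δ) (hδr : δ ≤ r) {t : ℝ} (ht : t ∈ Icc 0 T) :
    B * impBeta ts bs m T δ (t - δ) / impBeta ts bs m T δ t ∈
      Icc 0 (B * sSup (impBeta ts bs m T δ '' Icc (-r) T) /
        sInf (impBeta ts bs m T δ '' Icc (-r) T)) := by
  have hβ := impBeta_pos ts bs m T δ hbs
  have hK := le_sSup_image_impBeta ts bs m T δ (s := Icc (-r) T) (t := t - δ)
    ⟨by linarith [ht.1], by linarith [ht.2]⟩
  exact ⟨by have := hβ (t - δ); have := hβ t; positivity,
    div_le_div₀ (mul_nonneg hB ((hβ _).le.trans hK)) (mul_le_mul_of_nonneg_left hK hB)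
      (sInf_image_impBeta_pos ts bs m T δ hbs ⟨t, by linarith [ht.1], ht.2⟩)
      (sInf_image_impBeta_le ts bs m T δ ⟨by linarith [ht.1], ht.2⟩)⟩

end ImpBeta

section PeriodicExtension

variable {T δ : ℝ} {u : ℝ → ℝ}

lemma pext_of_neg {s : ℝ} (hs : s < 0) : pext T u s = u (s + T) := if_pos hs

lemma pext_of_nonneg {s : ℝ} (hs : 0 ≤ s) : pext T u s = u s := if_neg hs.not_gt

lemma pext_comp (F : ℝ → ℝ) (s : ℝ) : pext T (fun y => F (u y)) s = F (pext T u s) := by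
  unfold pext
  split_ifs <;> rfl

lemma continuousOn_pext (hT : 0 ≤ T) (hu : ContinuousOn u (Icc 0 T)) (hper : u 0 = u T) :
    ContinuousOn (pext T u) (Icc (-T) T) := by
  have hleft : ContinuousOn (pext T u) (Icc (-T) 0) := by
    refine (hu.comp (continuous_add_const T).continuousOn fun s hs =>
      ⟨by linarith [hs.1], by linarith [hs.2]⟩).congr fun s hs => ?_
    rcases hs.2.lt_or_eq with h | rfl
    · exact pext_of_neg h
    · simp [pext, hper]
  have hright : ContinuousOn (pext T u) (Icc 0 T) := hu.congr fun s hs => pext_of_nonneg hs.1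
  simpa [Icc_union_Icc_eq_Icc (neg_nonpos.2 hT) hT] using
    hleft.union_of_isClosed hright isClosed_Icc isClosed_Icc

lemma eqOn_pext_sub_left (hδ0 : 0 ≤ δ) :
    EqOn (fun t => pext T u (t - δ)) (fun t => u (t + (T - δ))) (uIoo 0 δ) := by
  intro t ht
  rw [uIoo_of_le hδ0] at ht
  simp only [pext_of_neg (sub_neg.2 ht.2)]
  ring_nf

lemma eqOn_pext_sub_right (hδT : δ ≤ T) :
    EqOn (fun t => pext T u (t - δ)) (fun t => u (t - δ)) (uIoo δ T) := by
  intro t ht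
  rw [uIoo_of_le hδT] at ht
  exact pext_of_nonneg (sub_nonneg.2 ht.1.le)

lemma delay_mem_uIcc (hδ0 : 0 ≤ δ) (hδT : δ ≤ T) : δ ∈ uIcc 0 T ∧ T - δ ∈ uIcc 0 T := by
  rw [uIcc_of_le (hδ0.trans hδT)]
  exact ⟨⟨hδ0, hδT⟩, by constructor <;> linarith⟩

lemma intervalIntegrable_pext_sub (hδ0 : 0 ≤ δ) (hδT : δ ≤ T)
    (hu : IntervalIntegrable u volume 0 T) :
    IntervalIntegrable (fun t => pext T u (t - δ)) volume 0 T := by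
  obtain ⟨-, hTδ⟩ := delay_mem_uIcc hδ0 hδT
  have hleft : IntervalIntegrable (fun t => u (t + (T - δ))) volume 0 δ := by
    simpa using (hu.mono_set (uIcc_subset_uIcc_right hTδ)).comp_add_right (T - δ)
  have hright : IntervalIntegrable (fun t => u (t - δ)) volume δ T := by
    simpa using (hu.mono_set (uIcc_subset_uIcc_left hTδ)).comp_sub_right δ
  exact (hleft.congr_uIoo (eqOn_pext_sub_left hδ0).symm).trans
    (hright.congr_uIoo (eqOn_pext_sub_right hδT).symm)

lemma integral_pext_sub (hδ0 : 0 ≤ δ) (hδT : δ ≤ T) (hu : IntervalIntegrable u volume 0 T) :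
    ∫ t in 0..T, pext T u (t - δ) = ∫ t in 0..T, u t := by
  have hP := intervalIntegrable_pext_sub hδ0 hδT hu
  obtain ⟨hδ, hTδ⟩ := delay_mem_uIcc hδ0 hδT
  calc ∫ t in 0..T, pext T u (t - δ)
      = (∫ t in 0..δ, pext T u (t - δ)) + ∫ t in δ..T, pext T u (t - δ) :=
        (intervalIntegral.integral_add_adjacent_intervals
          (hP.mono_set (uIcc_subset_uIcc_left hδ)) (hP.mono_set (uIcc_subset_uIcc_right hδ))).symm
    _ = (∫ t in 0..δ, u (t + (T - δ))) + ∫ t in δ..T, u (t - δ) := by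
        rw [intervalIntegral.integral_congr_uIoo (eqOn_pext_sub_left hδ0),
          intervalIntegral.integral_congr_uIoo (eqOn_pext_sub_right hδT)]
    _ = (∫ t in (T - δ)..T, u t) + ∫ t in 0..(T - δ), u t := by
        rw [intervalIntegral.integral_comp_add_right, intervalIntegral.integral_comp_sub_right]
        simp
    _ = ∫ t in 0..T, u t := by
        rw [add_comm, intervalIntegral.integral_add_adjacent_intervals
          (hu.mono_set (uIcc_subset_uIcc_left hTδ)) (hu.mono_set (uIcc_subset_uIcc_right hTδ))]

end PeriodicExtension

lemma ContinuousOn.forall_pos_or_forall_neg {f : ℝ → ℝ} {s : Set ℝ} (hs : IsPreconnected s)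
    (hf : ContinuousOn f s) (h0 : ∀ t ∈ s, f t ≠ 0) : (∀ t ∈ s, 0 < f t) ∨ ∀ t ∈ s, f t < 0 := by
  by_contra! h
  obtain ⟨⟨t₁, ht₁, h₁⟩, t₂, ht₂, h₂⟩ := h
  obtain ⟨t, ht, hft⟩ := hs.intermediate_value ht₁ ht₂ hf ⟨h₁, h₂⟩
  exact h0 t ht hft

lemma intervalIntegral_pos_of_ae_pos {f : ℝ → ℝ} {a b : ℝ} (hab : a < b)
    (hf : IntervalIntegrable f volume a b) (hpos : ∀ᵐ x, x ∈ Ioc a b → 0 < f x) :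
    0 < ∫ x in a..b, f x := by
  have hnn : 0 ≤ᵐ[volume.restrict (Ι a b)] f := by
    rw [uIoc_of_le hab.le]
    exact (ae_restrict_iff' measurableSet_Ioc).2 (hpos.mono fun x hx hmem => (hx hmem).le)
  rw [intervalIntegral.integral_pos_iff_support_of_nonneg_ae' hnn hf]
  have hIoc : 0 < volume (Ioc a b) := by simp [hab]
  exact ⟨hab, hIoc.trans_le (measure_mono_ae (hpos.mono fun x hx hmem => ⟨(hx hmem).ne', hmem⟩))⟩

theorem not_ae_pos_add_mul_pext {T δ q : ℝ} {g c : ℝ → ℝ} (hT : 0 < T) (hδ0 : 0 ≤ δ)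
    (hδT : δ ≤ T) (hq : q < 1) (hc : ∀ t ∈ Icc 0 T, c t ∈ Icc 0 q)
    (hg : IntervalIntegrable g volume 0 T) (hmean : ∫ t in 0..T, g t = 0) :
    ¬ ∀ᵐ t, t ∈ Icc 0 T → 0 < g t + c t * pext T g (t - δ) := by
  intro hpos
  set gp : ℝ → ℝ := fun s => max (g s) 0
  set gm : ℝ → ℝ := fun s => max (-g s) 0
  set P : ℝ → ℝ := fun t => pext T gp (t - δ)
  have hq0 : 0 ≤ q := nonempty_Icc.1 ⟨_, hc 0 ⟨le_rfl, hT.le⟩⟩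
  have hgp : IntervalIntegrable gp volume 0 T := ⟨hg.1.pos_part, hg.2.pos_part⟩
  have hgm : IntervalIntegrable gm volume 0 T := ⟨hg.1.neg_part, hg.2.neg_part⟩
  have hP : IntervalIntegrable P volume 0 T := intervalIntegrable_pext_sub hδ0 hδT hgp
  have hPint : ∫ t in 0..T, P t = ∫ t in 0..T, gp t := integral_pext_sub hδ0 hδT hgp
  have hPeq : ∀ t, P t = max (pext T g (t - δ)) 0 := fun t => pext_comp (fun y => max y 0) _
  have hP0 : ∀ t, 0 ≤ P t := fun t => hPeq t ▸ le_max_right _ _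
  have hdom : ∀ᵐ t, t ∈ Icc 0 T → 0 < g t + q * P t := by
    filter_upwards [hpos] with t ht hmem
    obtain ⟨hc0, hcq⟩ := hc t hmem
    have hgP : pext T g (t - δ) ≤ P t := hPeq t ▸ le_max_left _ _
    calc 0 < g t + c t * pext T g (t - δ) := ht hmem
      _ ≤ g t + c t * P t := by gcongr
      _ ≤ g t + q * P t := by gcongr; exact hP0 t
  have hgm_le : ∫ t in 0..T, gm t ≤ q * ∫ t in 0..T, gp t := by
    rw [← hPint, ← intervalIntegral.integral_const_mul]
    refine intervalIntegral.integral_mono_ae_restrict hT.le hgm (hP.const_mul q) ?_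
    filter_upwards [ae_restrict_mem measurableSet_Icc, ae_restrict_of_ae hdom] with t hmem ht
    exact max_le (by linarith [ht hmem]) (mul_nonneg hq0 (hP0 t))
  have hsplit : (∫ t in 0..T, gp t) - ∫ t in 0..T, gm t = 0 := by
    rw [← intervalIntegral.integral_sub hgp hgm]
    simpa only [gp, gm, max_zero_sub_eq_self] using hmean
  have hgp0 : ∫ t in 0..T, gp t = 0 := by
    have := intervalIntegral.integral_nonneg (μ := volume) hT.le fun t _ => le_max_right (g t) 0
    nlinarith
  have := intervalIntegral_pos_of_ae_pos hT (hg.add (hP.const_mul q))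
    (hdom.mono fun t ht hmem => ht (Ioc_subset_Icc_self hmem))
  rw [intervalIntegral.integral_add hg (hP.const_mul q), intervalIntegral.integral_const_mul,
    hPint, hmean, hgp0] at this
  simp at this

namespace AbsContOn

variable {x g : ℝ → ℝ} {a b : ℝ}

lemma intervalIntegrable (h : AbsContOn x g a b) (hab : a ≤ b) :
    IntervalIntegrable g volume a b :=
  (intervalIntegrable_iff_integrableOn_Icc_of_le hab).2 h.1

lemma continuousOn (h : AbsContOn x g a b) (hab : a ≤ b) : ContinuousOn x (Icc a b) := by
  have := intervalIntegral.continuousOn_primitive_interval (μ := volume) (f := g)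
    (a := a) (b := b) (by rw [uIcc_of_le hab]; exact h.1)
  rw [uIcc_of_le hab] at this
  exact (continuousOn_const.add this).congr h.2

lemma abs_sub_le (h : AbsContOn x g a b) (hab : a ≤ b) {s t : ℝ} (hs : s ∈ Icc a b)
    (ht : t ∈ Icc a b) : |x t - x s| ≤ ∫ u in a..b, |g u| := by
  have hg := h.intervalIntegrable hab
  have hsub : ∀ {v}, v ∈ Icc a b → uIcc a v ⊆ uIcc a b := fun hv =>
    uIcc_subset_uIcc_left (by rwa [uIcc_of_le hab])
  have hst : uIcc s t ⊆ uIcc a b :=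
    uIcc_subset_uIcc (by rwa [uIcc_of_le hab]) (by rwa [uIcc_of_le hab])
  calc |x t - x s| = |∫ u in s..t, g u| := by
        rw [h.2 t ht, h.2 s hs, add_sub_add_left_eq_sub,
          intervalIntegral.integral_interval_sub_left (hg.mono_set (hsub ht))
            (hg.mono_set (hsub hs))]
    _ ≤ |(∫ u in s..t, |g u|)| := by
        simpa only [Real.norm_eq_abs] using
          intervalIntegral.norm_integral_le_abs_integral_norm (f := g) (μ := volume)
    _ ≤ |(∫ u in a..b, |g u|)| := intervalIntegral.abs_integral_mono_interval
        (uIoc_subset_uIoc_of_uIcc_subset_uIcc hst)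
        (Eventually.of_forall fun _ => abs_nonneg _) hg.abs
    _ = ∫ u in a..b, |g u| :=
        abs_of_nonneg (intervalIntegral.integral_nonneg hab fun _ _ => abs_nonneg _)

end AbsContOn

lemma regulatedOn_pext_comp_add {T r t : ℝ} {x : ℝ → ℝ} (hx : ContinuousOn x (Icc 0 T))
    (hper : x 0 = x T) (hrT : r ≤ T) (ht : t ∈ Icc 0 T) :
    RegulatedOn (fun τ => pext T x (t + τ)) (-r) 0 :=
  ContinuousOn.regulatedOn <| (continuousOn_pext (ht.1.trans ht.2) hx hper).comp
    (continuous_const_add t).continuousOn fun τ hτ =>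
      ⟨by linarith [hτ.1, ht.1], by linarith [hτ.2, ht.2]⟩

lemma abs_mul_div_le_of_abs_le {lam y β k S b z : ℝ} (hlam0 : 0 < lam) (hlam1 : lam ≤ 1)
    (hk : 0 < k) (hkβ : k ≤ β) (hS : 0 ≤ S) (hy : |y| ≤ S + b * (β * |z|)) :
    |lam * y / β| ≤ S / k + b * |z| := by
  have hβ : 0 < β := hk.trans_le hkβ
  calc |lam * y / β| = lam * |y| / β := by rw [abs_div, abs_mul, abs_of_pos hlam0, abs_of_pos hβ]
    _ ≤ 1 * (S + b * (β * |z|)) / β := by gcongr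
    _ = S / β + b * |z| := by field_simp
    _ ≤ S / k + b * |z| := by gcongr

section NeutralEquation

variable {T δ q d A b : ℝ} {x g c F : ℝ → ℝ}

lemma exists_abs_le_of_neutral (hT : 0 < T) (hδ0 : 0 ≤ δ) (hδT : δ ≤ T) (hq : q < 1)
    (hc : ∀ t ∈ Icc 0 T, c t ∈ Icc 0 q) (hx : AbsContOn x g 0 T) (hper : x 0 = x T)
    (heq : ∀ᵐ t, t ∈ Icc 0 T → g t + c t * pext T g (t - δ) = F t)
    (hsign : ∀ t ∈ Icc 0 T, d ≤ |x t| → 0 < x t * F t) :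
    ∃ t₀ ∈ Icc 0 T, |x t₀| ≤ d := by
  by_contra! hbig
  have hxF : ∀ t ∈ Icc 0 T, 0 < x t * F t := fun t ht => hsign t ht (hbig t ht).le
  have hg := hx.intervalIntegrable hT.le
  have hmean : ∫ t in 0..T, g t = 0 := by
    linarith [hx.2 T ⟨hT.le, le_rfl⟩]
  rcases (hx.continuousOn hT.le).forall_pos_or_forall_neg isPreconnected_Icc
      fun t ht => left_ne_zero_of_mul (hxF t ht).ne' with hpos | hneg
  · refine not_ae_pos_add_mul_pext hT hδ0 hδT hq hc hg hmean ?_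
    filter_upwards [heq] with t ht hmem
    rw [ht hmem]
    exact pos_of_mul_pos_right (hxF t hmem) (hpos t hmem).le
  · refine not_ae_pos_add_mul_pext (g := fun s => -g s) hT hδ0 hδT hq hc hg.neg
      (by simp [intervalIntegral.integral_neg, hmean]) ?_
    filter_upwards [heq] with t ht hmem
    rw [pext_comp Neg.neg]
    linarith [ht hmem, neg_of_mul_pos_right (hxF t hmem) (hneg t hmem).le]

lemma abs_le_of_neutral_of_abs_le (hT : 0 < T) (hδ0 : 0 ≤ δ) (hδT : δ ≤ T)
    (hc : ∀ t ∈ Icc 0 T, c t ∈ Icc 0 q) (hb : 0 ≤ b) (hbT : b * T < 1 - q)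
    (hx : AbsContOn x g 0 T) (heq : ∀ᵐ t, t ∈ Icc 0 T → g t + c t * pext T g (t - δ) = F t)
    (hF : ∀ t ∈ Icc 0 T, |F t| ≤ A + b * |x t|) {t₀ : ℝ} (ht₀ : t₀ ∈ Icc 0 T)
    (hxt₀ : |x t₀| ≤ d) :
    ∀ t ∈ Icc 0 T, |x t| ≤ d + (A + b * d) * T / (1 - q - b * T) := by
  set G := ∫ t in 0..T, |g t|
  have hg := hx.intervalIntegrable hT.le
  have hxG : ∀ t ∈ Icc 0 T, |x t| ≤ d + G := fun t ht => by
    linarith [hx.abs_sub_le hT.le ht₀ ht, abs_sub_abs_le_abs_sub (x t) (x t₀)]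
  set P : ℝ → ℝ := fun t => pext T (fun s => |g s|) (t - δ)
  have hP : IntervalIntegrable P volume 0 T := intervalIntegrable_pext_sub hδ0 hδT hg.abs
  have hPint : ∫ t in 0..T, P t = G := integral_pext_sub hδ0 hδT hg.abs
  have hpt : ∀ᵐ t, t ∈ Icc 0 T → |g t| ≤ q * P t + (A + b * (d + G)) := by
    filter_upwards [heq] with t ht hmem
    obtain ⟨hc0, hcq⟩ := hc t hmem
    have hPt : P t = |pext T g (t - δ)| := pext_comp abs _
    calc |g t| = |F t - c t * pext T g (t - δ)| := by rw [← ht hmem, add_sub_cancel_right]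
      _ ≤ |F t| + c t * P t := by
        rw [hPt, ← abs_of_nonneg hc0, ← abs_mul, abs_of_nonneg hc0]
        exact abs_sub _ _
      _ ≤ (A + b * (d + G)) + q * P t := by
        gcongr
        · exact (hF t hmem).trans (by gcongr; exact hxG t hmem)
        · exact hPt ▸ abs_nonneg _
      _ = q * P t + (A + b * (d + G)) := add_comm _ _
  have hGle : G ≤ q * G + (A + b * (d + G)) * T := by
    calc G ≤ ∫ t in 0..T, (q * P t + (A + b * (d + G))) :=
          intervalIntegral.integral_mono_ae_restrict hT.le hg.abs
            ((hP.const_mul q).add intervalIntegrable_const)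
            ((ae_restrict_iff' measurableSet_Icc).2 hpt)
      _ = q * G + (A + b * (d + G)) * T := by
          rw [intervalIntegral.integral_add (hP.const_mul q) intervalIntegrable_const,
            intervalIntegral.integral_const_mul, hPint, intervalIntegral.integral_const,
            smul_eq_mul, sub_zero, mul_comm T]
  have hden : 0 < 1 - q - b * T := by linarith
  have hG : G ≤ (A + b * d) * T / (1 - q - b * T) := by
    rw [le_div_iff₀ hden]
    linarith
  exact fun t ht => (hxG t ht).trans (by linarith)

theorem abs_le_of_neutral (hT : 0 < T) (hδ0 : 0 ≤ δ) (hδT : δ ≤ T)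
    (hc : ∀ t ∈ Icc 0 T, c t ∈ Icc 0 q) (hb : 0 ≤ b) (hbT : b * T < 1 - q)
    (hx : AbsContOn x g 0 T) (hper : x 0 = x T)
    (heq : ∀ᵐ t, t ∈ Icc 0 T → g t + c t * pext T g (t - δ) = F t)
    (hsign : ∀ t ∈ Icc 0 T, d ≤ |x t| → 0 < x t * F t)
    (hF : ∀ t ∈ Icc 0 T, |F t| ≤ A + b * |x t|) :
    ∀ t ∈ Icc 0 T, |x t| ≤ d + (A + b * d) * T / (1 - q - b * T) := by
  have hq : q < 1 := by nlinarith [mul_nonneg hb hT.le]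
  obtain ⟨t₀, ht₀, hxt₀⟩ := exists_abs_le_of_neutral hT hδ0 hδT hq hc hx hper heq hsign
  exact abs_le_of_neutral_of_abs_le hT hδ0 hδT hc hb hbT hx heq hF ht₀ hxt₀

end NeutralEquation

theorem statement9_general
    (B r δ T : ℝ) (m : ℕ) (ts bs : ℕ → ℝ) (f : ℝ → (ℝ → ℝ) → ℝ)
    (hδ0 : 0 ≤ δ) (hδr : δ < r) (hrT : r ≤ T) (hB0 : 0 ≤ B)
    (hbk : ∀ k, 1 ≤ k → k ≤ m → -1 < bs k)
    (k0 K0 : ℝ)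
    (hk0 : k0 = sInf (impBeta ts bs m T δ '' Set.Icc (-r) T))
    (hK0 : K0 = sSup (impBeta ts bs m T δ '' Set.Icc (-r) T))
    (d : ℝ)
    (hH2 : ∀ φ : ℝ → ℝ, RegulatedOn φ (-r) 0 → d ≤ |φ 0| →
      ∀ t ∈ Set.Icc 0 T, 0 < φ 0 * f t (fun τ => impBeta ts bs m T δ (t + τ) * φ τ))
    (b : ℝ) (hb0 : 0 < b) (hbb : b < (k0 - B * K0) / (T * k0))
    (hH4 : ∀ φ ψ : ℝ → ℝ, RegulatedOn φ (-r) 0 → RegulatedOn ψ (-r) 0 →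
      ∀ t ∈ Set.Icc 0 T, |f t φ - f t ψ| ≤ b * |φ 0 - ψ 0|)
    (S : ℝ) (hS : 0 < S)
    (hfS : ∀ t ∈ Set.Icc (0:ℝ) T, |f t (fun _ => (0:ℝ))| ≤ S)
    (lam : ℝ) (hlam0 : 0 < lam) (hlam1 : lam < 1)
    (x g : ℝ → ℝ)
    (hAC : AbsContOn x g 0 T) (hper : x 0 = x T)
    (heq : ∀ᵐ t ∂volume, t ∈ Set.Icc 0 T →
      g t + B * impBeta ts bs m T δ (t - δ) * pext T g (t - δ) / impBeta ts bs m T δ t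
        = lam * f t (fun τ => impBeta ts bs m T δ (t + τ) * pext T x (t + τ)) / impBeta ts bs m T δ t)
    :
    ∀ t ∈ Set.Icc (0:ℝ) T,
      |x t| ≤ d + (b * d * k0 + S) * T / (k0 - b * T * k0 - B * K0) := by
  set β := impBeta ts bs m T δ
  have hT : 0 < T := (hδ0.trans_lt hδr).trans_le hrT
  have hβ : ∀ t, 0 < β t := impBeta_pos ts bs m T δ hbk
  have hk0pos : 0 < k0 :=
    hk0 ▸ sInf_image_impBeta_pos ts bs m T δ hbk (nonempty_Icc.2 (by linarith))
  have hk0le : ∀ t ∈ Icc 0 T, k0 ≤ β t := fun t ht =>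
    hk0 ▸ sInf_image_impBeta_le ts bs m T δ ⟨by linarith [ht.1], ht.2⟩
  have hc : ∀ t ∈ Icc 0 T, B * β (t - δ) / β t ∈ Icc 0 (B * K0 / k0) := fun t ht =>
    hk0 ▸ hK0 ▸ impBeta_delay_ratio_mem_Icc ts bs m T δ hbk hB0 hδ0 hδr.le ht
  have hbT : b * T < 1 - B * K0 / k0 := by
    rw [lt_div_iff₀ (mul_pos hT hk0pos)] at hbb
    rw [one_sub_div hk0pos.ne', lt_div_iff₀ hk0pos]
    linarith
  have hreg : ∀ t ∈ Icc 0 T, RegulatedOn (fun τ => pext T x (t + τ)) (-r) 0 := fun t ht =>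
    regulatedOn_pext_comp_add (hAC.continuousOn hT.le) hper hrT ht
  intro t ht
  have key := abs_le_of_neutral (A := S / k0) (d := d)
    (F := fun t => lam * f t (fun τ => β (t + τ) * pext T x (t + τ)) / β t)
    hT hδ0 (by linarith) hc hb0.le hbT hAC hper ?_ ?_ ?_ t ht
  · convert key using 2
    field_simp
    ring
  · filter_upwards [heq] with t ht hmem
    rw [← ht hmem]
    ring
  · intro t ht hdx
    have h := hH2 _ (hreg t ht) (by simpa [pext_of_nonneg ht.1] using hdx) t ht
    simp only [add_zero, pext_of_nonneg ht.1] at h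
    rw [mul_div_assoc', mul_left_comm, mul_div_right_comm]
    exact mul_pos (div_pos hlam0 (hβ t)) h
  · intro t ht
    have hφ : RegulatedOn (fun τ => β (t + τ) * pext T x (t + τ)) (-r) 0 :=
      (regulatedOn_impBeta_comp_add ts bs m T δ t _ _).mul (hreg t ht)
    have h := hH4 _ (fun _ => 0) hφ continuousOn_const.regulatedOn t ht
    simp only [add_zero, sub_zero, pext_of_nonneg ht.1, abs_mul, abs_of_pos (hβ t)] at h
    have hf := (abs_sub_abs_le_abs_sub _ _).trans h
    exact abs_mul_div_le_of_abs_le hlam0 hlam1.le hk0pos (hk0le t ht) hS.le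
      (by linarith [hfS t ht])

/-- Uniform a priori bound, independent of `λ`: any periodic solution of `Lx = λ Nx`
satisfies `‖x‖_∞ ≤ D := d + (b·d·k₀ + S)·T/(k₀ - b·T·k₀ - B·K₀)`. -/
theorem statement9
    (B r δ T : ℝ) (m : ℕ) (ts bs : ℕ → ℝ) (f : ℝ → (ℝ → ℝ) → ℝ)
    (hδ0 : 0 ≤ δ) (hδr : δ < r) (hrT : r ≤ T) (hB0 : 0 ≤ B)
    (hm : 1 ≤ m) (ht1 : 0 < ts 1)
    (htmono : ∀ k, 1 ≤ k → k < m → ts k < ts (k + 1))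
    (htm : ts m < T - δ)
    (hbk : ∀ k, 1 ≤ k → k ≤ m → -1 < bs k)
    (k0 K0 : ℝ)
    (hk0 : k0 = sInf (impBeta ts bs m T δ '' Set.Icc (-r) T))
    (hK0 : K0 = sSup (impBeta ts bs m T δ '' Set.Icc (-r) T))
    (hH1 : ∀ φ : ℝ → ℝ, (∃ gφ : ℝ → ℝ, AbsContOn φ gφ (-r) 0) →
      ContinuousOn (fun t => f t (fun τ => impBeta ts bs m T δ (t + τ) * φ τ)) (Set.Icc 0 T))
    (d : ℝ) (hd : 0 < d)
    (hH2 : ∀ φ : ℝ → ℝ, RegulatedOn φ (-r) 0 → d ≤ |φ 0| →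
      ∀ t ∈ Set.Icc 0 T, 0 < φ 0 * f t (fun τ => impBeta ts bs m T δ (t + τ) * φ τ))
    (hH3 : B < k0 / K0)
    (b : ℝ) (hb0 : 0 < b) (hbb : b < (k0 - B * K0) / (T * k0))
    (hH4 : ∀ φ ψ : ℝ → ℝ, RegulatedOn φ (-r) 0 → RegulatedOn ψ (-r) 0 →
      ∀ t ∈ Set.Icc 0 T, |f t φ - f t ψ| ≤ b * |φ 0 - ψ 0|)
    (S : ℝ) (hS : 0 < S)
    (hfS : ∀ t ∈ Set.Icc (0:ℝ) T, |f t (fun _ => (0:ℝ))| ≤ S)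
    (lam : ℝ) (hlam0 : 0 < lam) (hlam1 : lam < 1)
    (x g : ℝ → ℝ)
    (hAC : AbsContOn x g 0 T) (hper : x 0 = x T)
    (heq : ∀ᵐ t ∂volume, t ∈ Set.Icc 0 T →
      g t + B * impBeta ts bs m T δ (t - δ) * pext T g (t - δ) / impBeta ts bs m T δ t
        = lam * f t (fun τ => impBeta ts bs m T δ (t + τ) * pext T x (t + τ)) / impBeta ts bs m T δ t)
    :
    ∀ t ∈ Set.Icc (0:ℝ) T,
      |x t| ≤ d + (b * d * k0 + S) * T / (k0 - b * T * k0 - B * K0) :=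
  statement9_general B r δ T m ts bs f hδ0 hδr hrT hB0 hbk k0 K0 hk0 hK0 d hH2 b hb0 hbb hH4 S hS
    hfS lam hlam0 hlam1 x g hAC hper heq
end
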